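/- arXiv:2003.05882 — 9 statements merged into one kernel-verified Lean document; each statement's English description precedes it below -/
import Mathlib

section
/- Let E be a parallel network with capacities c, let 0 ≤ r ≤ C(E), let f ∈ F(c,r), and let 0 ≤ π̲^a ≤ π̄^a ≤ C(E). Let α = { C(E') : E' ⊆ E } (a finite set with at most 2^|E| elements). Then sup_{r^a ∈ [π̲^a, π̄^a]} ( B*(f, r^a) − B^SE(r, r^a) ) = max_{r^a ∈ (α ∩ [π̲^a, π̄^a]) ∪ {π̲^a, π̄^a}} ( B*(f, r^a) − B^SE(r, r^a) ). -/
open Finset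

noncomputable section

/-- Set of feasible profiles routing `r` units of traffic with per-edge capacities `c`. -/
def Feas {E : Type*} [Fintype E] (c : E → ℝ) (r : ℝ) : Set (E → ℝ) :=
  {f | ∑ e, f e = r ∧ ∀ e, 0 ≤ f e ∧ f e ≤ c e}

/-- Total blocked traffic. -/
def Blocked {E : Type*} [Fintype E] (c f fa : E → ℝ) : ℝ :=
  ∑ e, max (f e + fa e - c e) 0

/-- Best-response value of the attacker against routing `f` with budget `ra`. -/
def Bstar {E : Type*} [Fintype E] (c : E → ℝ) (f : E → ℝ) (ra : ℝ) : ℝ :=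
  sSup ((fun fa => Blocked c f fa) '' Feas c ra)

/-- Stackelberg value. -/
def BSE {E : Type*} [Fintype E] (c : E → ℝ) (r ra : ℝ) : ℝ :=
  sInf ((fun f => Bstar c f ra) '' Feas c r)

/-- max over nonempty E' ⊆ E of (C(E') - r)/|E'|. -/
def gval {E : Type*} [Fintype E] [Nonempty E] (c : E → ℝ) (r : ℝ) : ℝ :=
  (univ.powerset.filter fun s : Finset E => s.Nonempty).sup'
    ⟨univ, by simp [Finset.univ_nonempty]⟩
    (fun s => ((∑ e ∈ s, c e) - r) / s.card)

/-- max over nonempty E' ⊆ E of (r - C(E \ E'))/|E'|. -/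
def hval {E : Type*} [Fintype E] [Nonempty E] [DecidableEq E] (c : E → ℝ) (r : ℝ) : ℝ :=
  (univ.powerset.filter fun s : Finset E => s.Nonempty).sup'
    ⟨univ, by simp [Finset.univ_nonempty]⟩
    (fun s => (r - ∑ e ∈ univ \ s, c e) / s.card)

/-- `fa` is a best-response attack to `f`. -/
def IsBestResponse {E : Type*} [Fintype E] (c : E → ℝ) (ra : ℝ) (f fa : E → ℝ) : Prop :=
  fa ∈ Feas c ra ∧ ∀ fa' ∈ Feas c ra, Blocked c f fa' ≤ Blocked c f fa

/-- Nash equilibrium. -/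
def IsNash {E : Type*} [Fintype E] (c : E → ℝ) (r ra : ℝ) (f fa : E → ℝ) : Prop :=
  f ∈ Feas c r ∧ fa ∈ Feas c ra ∧
    (∀ f' ∈ Feas c r, Blocked c f fa ≤ Blocked c f' fa) ∧
    (∀ fa' ∈ Feas c ra, Blocked c f fa' ≤ Blocked c f fa)

/-- Stackelberg equilibrium. -/
def IsStackelberg {E : Type*} [Fintype E] (c : E → ℝ) (r ra : ℝ) (f fa : E → ℝ) : Prop :=
  f ∈ Feas c r ∧ fa ∈ Feas c ra ∧
    (∀ f' ∈ Feas c r, Bstar c f ra ≤ Bstar c f' ra) ∧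
    (∀ fa' ∈ Feas c ra, Blocked c f fa' ≤ Blocked c f fa)

/-!
For `0 ≤ x ≤ C(E)` the attacker's best response has the closed form
`B*(f, x) = max_T (∑_{e ∈ T} (f e - c e) + min x (C T))`: put as much of the budget as possible
on the edges of `T`. Each term is constant in `x` above `C T` and has slope one below it.
Every `B*(f', ·)` is therefore nondecreasing and `1`-Lipschitz, and so is their infimum `B^SE`.
Take an interval `[a, b]` with no `C T` strictly inside and `x ∈ [a, b]`, and let `T` be optimal
at `x`. If `C T ≤ a`, moving from `x` down to `a` does not lower `B*(f, ·)` and does not raise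
`B^SE`. If `b ≤ C T`, moving from `x` up to `b` raises `B*(f, ·)` by exactly `b - x` and `B^SE`
by at most that. Either way the difference at `x` is at most its value at an endpoint.
-/

section LinearOrder

variable {α β : Type*} [LinearOrder α]

lemma Finset.exists_bracket (S : Finset α) {x : α} (ha : ∃ a ∈ S, a ≤ x)
    (hb : ∃ b ∈ S, x ≤ b) :
    ∃ a ∈ S, ∃ b ∈ S, a ≤ x ∧ x ≤ b ∧ ∀ y ∈ S, y ∉ Set.Ioo a b := by
  have hA : (S.filter (· ≤ x)).Nonempty := by simpa [Finset.Nonempty] using ha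
  have hB : (S.filter (x ≤ ·)).Nonempty := by simpa [Finset.Nonempty] using hb
  obtain ⟨haS, hax⟩ := mem_filter.1 (max'_mem _ hA)
  obtain ⟨hbS, hxb⟩ := mem_filter.1 (min'_mem _ hB)
  refine ⟨_, haS, _, hbS, hax, hxb, fun y hy ⟨hay, hyb⟩ => ?_⟩
  rcases le_total y x with hyx | hxy
  · exact (le_max' _ y (mem_filter.2 ⟨hy, hyx⟩)).not_gt hay
  · exact (min'_le _ y (mem_filter.2 ⟨hy, hxy⟩)).not_gt hyb

lemma sSup_image_Icc_eq_sup' [ConditionallyCompleteLinearOrder β] {g : α → β} {lo hi : α}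
    (S : Finset α) (hlo : lo ∈ S) (hhi : hi ∈ S) (hS : ∀ y ∈ S, y ∈ Set.Icc lo hi)
    (hg : ∀ a ∈ S, ∀ b ∈ S, ∀ x ∈ Set.Icc a b, (∀ y ∈ S, y ∉ Set.Ioo a b) →
      g x ≤ max (g a) (g b)) :
    sSup (g '' Set.Icc lo hi) = S.sup' ⟨lo, hlo⟩ g := by
  obtain ⟨z, hz, hmax⟩ := exists_mem_eq_sup' ⟨lo, hlo⟩ g
  rw [hmax]
  refine IsGreatest.csSup_eq ⟨⟨z, hS z hz, rfl⟩, ?_⟩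
  rintro _ ⟨x, ⟨hlox, hxhi⟩, rfl⟩
  obtain ⟨a, ha, b, hb, hax, hxb, hgap⟩ := S.exists_bracket ⟨lo, hlo, hlox⟩ ⟨hi, hhi, hxhi⟩
  rw [← hmax]
  exact (hg a ha b hb x ⟨hax, hxb⟩ hgap).trans (max_le (le_sup' g ha) (le_sup' g hb))

end LinearOrder

section ParallelNetwork

variable {E : Type*} {c : E → ℝ}

def attackGain (c f : E → ℝ) (T : Finset E) (x : ℝ) : ℝ :=
  ∑ e ∈ T, (f e - c e) + min x (∑ e ∈ T, c e)

lemma attackGain_mono (f : E → ℝ) (T : Finset E) : Monotone (attackGain c f T) :=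
  fun _ _ h => add_le_add_right (min_le_min_right _ h) _

lemma attackGain_le_add (f : E → ℝ) (T : Finset E) {x y : ℝ} (h : x ≤ y) :
    attackGain c f T y ≤ attackGain c f T x + (y - x) := by
  have := min_le_min (le_of_eq (by ring : y = x + (y - x)))
    (le_add_of_nonneg_right (sub_nonneg.2 h) : ∑ e ∈ T, c e ≤ ∑ e ∈ T, c e + (y - x))
  rw [min_add_add_right] at this
  unfold attackGain
  linarith

lemma attackGain_eq_of_capacity_le (f : E → ℝ) {T : Finset E} {x y : ℝ}
    (hx : ∑ e ∈ T, c e ≤ x) (hy : ∑ e ∈ T, c e ≤ y) :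
    attackGain c f T x = attackGain c f T y := by
  simp only [attackGain, min_eq_right hx, min_eq_right hy]

lemma attackGain_eq_add_of_le_capacity (f : E → ℝ) {T : Finset E} {x y : ℝ}
    (hx : x ≤ ∑ e ∈ T, c e) (hy : y ≤ ∑ e ∈ T, c e) :
    attackGain c f T y = attackGain c f T x + (y - x) := by
  simp only [attackGain, min_eq_left hx, min_eq_left hy]
  ring

lemma sum_add_sub_eq (f fa : E → ℝ) (T : Finset E) :
    ∑ e ∈ T, (f e + fa e - c e) = ∑ e ∈ T, (f e - c e) + ∑ e ∈ T, fa e := by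
  rw [← sum_add_distrib]
  exact sum_congr rfl fun _ _ => by ring

lemma exists_capacity_bounded_sum_eq (hc : ∀ e, 0 ≤ c e) (S : Finset E) {ρ : ℝ} (h0 : 0 ≤ ρ)
    (hρ : ρ ≤ ∑ e ∈ S, c e) :
    ∃ g : E → ℝ, (∀ e, 0 ≤ g e ∧ g e ≤ c e) ∧ ∑ e ∈ S, g e = ρ := by
  have ht0 : 0 ≤ ρ / ∑ e ∈ S, c e := div_nonneg h0 (h0.trans hρ)
  have ht1 : ρ / ∑ e ∈ S, c e ≤ 1 := div_le_one_of_le₀ hρ (h0.trans hρ)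
  refine ⟨fun e => ρ / (∑ e ∈ S, c e) * c e,
    fun e => ⟨mul_nonneg ht0 (hc e), mul_le_of_le_one_left (hc e) ht1⟩, ?_⟩
  rw [← mul_sum]
  exact div_mul_cancel_of_imp fun h => le_antisymm (hρ.trans h.le) h0

variable [Fintype E]

lemma feas_nonempty (hc : ∀ e, 0 ≤ c e) {x : ℝ} (hx : x ∈ Set.Icc 0 (∑ e, c e)) :
    (Feas c x).Nonempty :=
  let ⟨g, hg, hsum⟩ := exists_capacity_bounded_sum_eq hc univ hx.1 hx.2
  ⟨g, hsum, hg⟩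

lemma exists_mem_feas_sum_eq_min (hc : ∀ e, 0 ≤ c e) (T : Finset E) {x : ℝ}
    (hx : x ∈ Set.Icc 0 (∑ e, c e)) :
    ∃ fa ∈ Feas c x, ∑ e ∈ T, fa e = min x (∑ e ∈ T, c e) := by
  classical
  have hrest : x - min x (∑ e ∈ T, c e) ≤ ∑ e ∈ Tᶜ, c e := by
    have := sum_compl_add_sum T c
    have := sum_nonneg fun e (_ : e ∈ Tᶜ) => hc e
    rcases min_choice x (∑ e ∈ T, c e) with h | h <;> rw [h] <;> linarith [hx.2]
  obtain ⟨g, hg, hgT⟩ := exists_capacity_bounded_sum_eq hc T (le_min hx.1 (sum_nonneg fun e _ => hc e))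
    (min_le_right _ _)
  obtain ⟨g', hg', hg'T⟩ := exists_capacity_bounded_sum_eq hc Tᶜ (sub_nonneg.2 (min_le_left _ _)) hrest
  refine ⟨T.piecewise g g', ⟨?_, fun e => ?_⟩, ?_⟩
  · rw [sum_piecewise, univ_inter, ← compl_eq_univ_sdiff, hgT, hg'T]
    ring
  · by_cases he : e ∈ T
    · simpa [he] using hg e
    · simpa [he] using hg' e
  · rw [← hgT]
    exact sum_congr rfl fun e he => piecewise_eq_of_mem _ _ _ he

lemma blocked_eq_sum_filter (f fa : E → ℝ) :
    Blocked c f fa = ∑ e with c e < f e + fa e, (f e + fa e - c e) := by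
  rw [Blocked, sum_filter]
  refine sum_congr rfl fun e _ => ?_
  split_ifs with h
  · exact max_eq_left (by linarith)
  · exact max_eq_right (by linarith)

lemma sum_add_sub_le_blocked (f fa : E → ℝ) (T : Finset E) :
    ∑ e ∈ T, (f e + fa e - c e) ≤ Blocked c f fa :=
  calc ∑ e ∈ T, (f e + fa e - c e) ≤ ∑ e ∈ T, max (f e + fa e - c e) 0 :=
        sum_le_sum fun _ _ => le_max_left _ _
    _ ≤ Blocked c f fa :=
        sum_le_sum_of_subset_of_nonneg (subset_univ T) fun _ _ _ => le_max_right _ _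

lemma sum_le_min_of_mem_feas {fa : E → ℝ} {x : ℝ} (hfa : fa ∈ Feas c x) (T : Finset E) :
    ∑ e ∈ T, fa e ≤ min x (∑ e ∈ T, c e) := by
  refine le_min ?_ (sum_le_sum fun e _ => (hfa.2 e).2)
  rw [← hfa.1]
  exact sum_le_sum_of_subset_of_nonneg (subset_univ T) fun e _ _ => (hfa.2 e).1

lemma exists_blocked_le_attackGain (f : E → ℝ) {fa : E → ℝ} {x : ℝ} (hfa : fa ∈ Feas c x) :
    ∃ T, Blocked c f fa ≤ attackGain c f T x := by
  refine ⟨({e | c e < f e + fa e} : Finset E), ?_⟩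
  rw [blocked_eq_sum_filter, sum_add_sub_eq, attackGain]
  exact add_le_add_right (sum_le_min_of_mem_feas hfa _) _

lemma exists_attackGain_le_blocked (f : E → ℝ) (hc : ∀ e, 0 ≤ c e) (T : Finset E) {x : ℝ}
    (hx : x ∈ Set.Icc 0 (∑ e, c e)) :
    ∃ fa ∈ Feas c x, attackGain c f T x ≤ Blocked c f fa := by
  obtain ⟨fa, hfa, hsum⟩ := exists_mem_feas_sum_eq_min hc T hx
  refine ⟨fa, hfa, ?_⟩
  rw [attackGain, ← hsum, ← sum_add_sub_eq]
  exact sum_add_sub_le_blocked f fa T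

lemma bstar_eq_sup' (f : E → ℝ) (hc : ∀ e, 0 ≤ c e) {x : ℝ} (hx : x ∈ Set.Icc 0 (∑ e, c e)) :
    Bstar c f x = univ.sup' univ_nonempty (attackGain c f · x) := by
  have hbdd : ∀ b ∈ (fun fa => Blocked c f fa) '' Feas c x,
      b ≤ univ.sup' univ_nonempty (attackGain c f · x) := by
    rintro _ ⟨fa, hfa, rfl⟩
    obtain ⟨T, hT⟩ := exists_blocked_le_attackGain f hfa
    exact hT.trans (le_sup' (attackGain c f · x) (mem_univ T))
  refine le_antisymm (csSup_le ((feas_nonempty hc hx).image _) hbdd) (sup'_le _ _ fun T _ => ?_)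
  obtain ⟨fa, hfa, hle⟩ := exists_attackGain_le_blocked f hc T hx
  exact hle.trans (le_csSup ⟨_, hbdd⟩ ⟨fa, hfa, rfl⟩)

lemma attackGain_le_bstar (f : E → ℝ) (hc : ∀ e, 0 ≤ c e) (T : Finset E) {x : ℝ}
    (hx : x ∈ Set.Icc 0 (∑ e, c e)) : attackGain c f T x ≤ Bstar c f x := by
  rw [bstar_eq_sup' f hc hx]
  exact le_sup' (attackGain c f · x) (mem_univ T)

lemma exists_bstar_eq_attackGain (f : E → ℝ) (hc : ∀ e, 0 ≤ c e) {x : ℝ}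
    (hx : x ∈ Set.Icc 0 (∑ e, c e)) : ∃ T, Bstar c f x = attackGain c f T x := by
  obtain ⟨T, -, hT⟩ := exists_mem_eq_sup' univ_nonempty (attackGain c f · x)
  exact ⟨T, (bstar_eq_sup' f hc hx).trans hT⟩

lemma bstar_nonneg (f : E → ℝ) (hc : ∀ e, 0 ≤ c e) {x : ℝ} (hx : x ∈ Set.Icc 0 (∑ e, c e)) :
    0 ≤ Bstar c f x := by
  simpa [attackGain, hx.1] using attackGain_le_bstar f hc ∅ hx

lemma bstar_monotoneOn (f : E → ℝ) (hc : ∀ e, 0 ≤ c e) :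
    MonotoneOn (Bstar c f) (Set.Icc 0 (∑ e, c e)) := by
  intro x hx y hy hxy
  obtain ⟨T, hT⟩ := exists_bstar_eq_attackGain f hc hx
  rw [hT]
  exact (attackGain_mono f T hxy).trans (attackGain_le_bstar f hc T hy)

lemma bstar_le_add (f : E → ℝ) (hc : ∀ e, 0 ≤ c e) {x y : ℝ}
    (hx : x ∈ Set.Icc 0 (∑ e, c e)) (hy : y ∈ Set.Icc 0 (∑ e, c e)) (hxy : x ≤ y) :
    Bstar c f y ≤ Bstar c f x + (y - x) := by
  obtain ⟨T, hT⟩ := exists_bstar_eq_attackGain f hc hy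
  rw [hT]
  linarith [attackGain_le_add (c := c) f T hxy, attackGain_le_bstar f hc T hx]

lemma bse_le_bstar (hc : ∀ e, 0 ≤ c e) {r x : ℝ} {f : E → ℝ} (hf : f ∈ Feas c r)
    (hx : x ∈ Set.Icc 0 (∑ e, c e)) : BSE c r x ≤ Bstar c f x :=
  csInf_le ⟨0, by rintro _ ⟨f', -, rfl⟩; exact bstar_nonneg f' hc hx⟩ ⟨f, hf, rfl⟩

lemma bse_monotoneOn (hc : ∀ e, 0 ≤ c e) {r : ℝ} (hr : r ∈ Set.Icc 0 (∑ e, c e)) :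
    MonotoneOn (BSE c r) (Set.Icc 0 (∑ e, c e)) := by
  intro x hx y hy hxy
  refine le_csInf ((feas_nonempty hc hr).image _) ?_
  rintro _ ⟨f, hf, rfl⟩
  exact (bse_le_bstar hc hf hx).trans (bstar_monotoneOn f hc hx hy hxy)

lemma bse_le_add (hc : ∀ e, 0 ≤ c e) {r x y : ℝ} (hr : r ∈ Set.Icc 0 (∑ e, c e))
    (hx : x ∈ Set.Icc 0 (∑ e, c e)) (hy : y ∈ Set.Icc 0 (∑ e, c e)) (hxy : x ≤ y) :
    BSE c r y ≤ BSE c r x + (y - x) := by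
  rw [← sub_le_iff_le_add]
  refine le_csInf ((feas_nonempty hc hr).image _) ?_
  rintro _ ⟨f, hf, rfl⟩
  linarith [bse_le_bstar hc hf hy, bstar_le_add f hc hx hy hxy]

lemma bstar_sub_bse_le_max (f : E → ℝ) (hc : ∀ e, 0 ≤ c e) {r a x b : ℝ}
    (hr : r ∈ Set.Icc 0 (∑ e, c e)) (ha : a ∈ Set.Icc 0 (∑ e, c e))
    (hb : b ∈ Set.Icc 0 (∑ e, c e)) (hax : a ≤ x) (hxb : x ≤ b)
    (hgap : ∀ T : Finset E, ∑ e ∈ T, c e ∉ Set.Ioo a b) :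
    Bstar c f x - BSE c r x ≤ max (Bstar c f a - BSE c r a) (Bstar c f b - BSE c r b) := by
  have hx : x ∈ Set.Icc 0 (∑ e, c e) := ⟨ha.1.trans hax, hxb.trans hb.2⟩
  obtain ⟨T, hT⟩ := exists_bstar_eq_attackGain f hc hx
  rcases le_or_gt (∑ e ∈ T, c e) a with hTa | haT
  · have hflat := attackGain_eq_of_capacity_le f hTa (hTa.trans hax)
    have := attackGain_le_bstar f hc T ha
    have := bse_monotoneOn hc hr ha hx hax
    exact le_max_of_le_left (by linarith)
  · have hbT : b ≤ ∑ e ∈ T, c e := not_lt.1 fun hTb => hgap T ⟨haT, hTb⟩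
    have hslope := attackGain_eq_add_of_le_capacity f (hxb.trans hbT) hbT
    have := attackGain_le_bstar f hc T hb
    have := bse_le_add hc hr hx hb hxb
    exact le_max_of_le_right (by linarith)

end ParallelNetwork

/-- The supremum of `B*(f,·) - B^SE(r,·)` over the interval `[lo, hi]` is
attained on the finite set `(α ∩ [lo,hi]) ∪ {lo, hi}` where `α = {C(E') : E' ⊆ E}`. -/
theorem stmt3 {E : Type*} [Fintype E]
    (c : E → ℝ) (hc : ∀ e, 0 ≤ c e) (r : ℝ) (hr0 : 0 ≤ r) (hrC : r ≤ ∑ e, c e)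
    (f : E → ℝ)
    (lo hi : ℝ) (hlo : 0 ≤ lo) (hlh : lo ≤ hi) (hhi : hi ≤ ∑ e, c e) :
    sSup ((fun ra => Bstar c f ra - BSE c r ra) '' Set.Icc lo hi) =
      (((univ.powerset.image fun s : Finset E => ∑ e ∈ s, c e).filter
          fun x => lo ≤ x ∧ x ≤ hi) ∪ {lo, hi}).sup'
        ⟨lo, by simp⟩ (fun ra => Bstar c f ra - BSE c r ra) := by
  have hS : ∀ y ∈ ((univ.powerset.image fun s : Finset E => ∑ e ∈ s, c e).filter
      fun x => lo ≤ x ∧ x ≤ hi) ∪ {lo, hi}, y ∈ Set.Icc lo hi := by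
    simp only [mem_union, mem_filter, mem_insert, mem_singleton]
    rintro y (⟨-, hy⟩ | rfl | rfl)
    exacts [hy, ⟨le_rfl, hlh⟩, ⟨hlh, le_rfl⟩]
  refine sSup_image_Icc_eq_sup' _ (by simp) (by simp) hS fun a ha b hb x hx hgap => ?_
  have hIcc : Set.Icc lo hi ⊆ Set.Icc 0 (∑ e, c e) := Set.Icc_subset_Icc hlo hhi
  refine bstar_sub_bse_le_max f hc ⟨hr0, hrC⟩ (hIcc (hS a ha)) (hIcc (hS b hb)) hx.1 hx.2
    fun T hT => hgap _ (mem_union_left _ (mem_filter.2 ⟨mem_image_of_mem _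
      (mem_powerset.2 (subset_univ T)), (hS a ha).1.trans hT.1.le, hT.2.le.trans (hS b hb).2⟩)) hT
end
end

section
/- Consider a two-link parallel network with capacities 0 ≤ c_1 ≤ c_2, let 0 ≤ r ≤ c_1 + c_2, 0 ≤ r^a ≤ c_1 + c_2, and let f ∈ F(c,r). Define the attack profiles f^{a1}(r^a) := ( min{r^a, c_1}, max{r^a − c_1, 0} ) and f^{a2}(r^a) := ( max{r^a − c_2, 0}, min{r^a, c_2} ). Then max_{f^a ∈ F^a(c,r^a)} B(f, f^a) = max{ B(f, f^{a1}(r^a)), B(f, f^{a2}(r^a)) }. -/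
open Finset

noncomputable section

open Set

/-! Blocked traffic is a sum of maxima of affine functions, hence convex in the attack profile.
On two links a feasible attack is determined by its flow `x` on the first link, and the feasible
values of `x` form an interval whose endpoints give `f^{a2}` and `f^{a1}`; a convex function on an
interval attains its maximum at an endpoint. -/

theorem convexOn_blocked {E : Type*} [Fintype E] (c f : E → ℝ) :
    ConvexOn ℝ univ (Blocked c f) := by
  have h : Blocked c f = ∑ e, fun fa : E → ℝ => max (fa e + (f e - c e)) 0 := by
    ext fa
    simp only [Blocked, Finset.sum_apply]
    congr 1; ext e; ring_nf
  rw [h]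
  refine Finset.sum_induction _ (ConvexOn ℝ univ) (fun _ _ => ConvexOn.add)
    (convexOn_const 0 convex_univ) fun e _ => ?_
  exact (((LinearMap.proj e : (E → ℝ) →ₗ[ℝ] ℝ).convexOn convex_univ).add_const _).sup
    (convexOn_const 0 convex_univ)

theorem ConvexOn.sSup_image_Icc {g : ℝ → ℝ} {a b : ℝ} (hg : ConvexOn ℝ (Icc a b) g)
    (hab : a ≤ b) : sSup (g '' Icc a b) = max (g a) (g b) := by
  have ha : a ∈ Icc a b := left_mem_Icc.2 hab
  have hb : b ∈ Icc a b := right_mem_Icc.2 hab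
  refine IsGreatest.csSup_eq ⟨?_, ?_⟩
  · rcases max_choice (g a) (g b) with h | h <;> rw [h]
    exacts [mem_image_of_mem g ha, mem_image_of_mem g hb]
  · rintro _ ⟨x, hx, rfl⟩
    exact hg.le_max_of_mem_Icc ha hb hx

def splitAttack (ra : ℝ) : ℝ →ᵃ[ℝ] Fin 2 → ℝ := AffineMap.lineMap ![0, ra] ![1, ra - 1]

theorem splitAttack_apply (ra x : ℝ) : splitAttack ra x = ![x, ra - x] := by
  ext i
  fin_cases i <;> simp [splitAttack, AffineMap.lineMap_apply, neg_add_eq_sub]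

theorem feas_two_link_eq_image (c₁ c₂ ra : ℝ) :
    Feas ![c₁, c₂] ra = splitAttack ra '' Icc (max (ra - c₂) 0) (min ra c₁) := by
  ext fa
  simp only [Feas, Fin.sum_univ_two, Fin.forall_fin_two, Set.mem_ofPred_eq, mem_image,
    Set.mem_Icc, splitAttack_apply, max_le_iff, le_min_iff, Matrix.cons_val_zero,
    Matrix.cons_val_one]
  constructor
  · rintro ⟨hsum, ⟨h0, h0c⟩, ⟨h1, h1c⟩⟩
    refine ⟨fa 0, ⟨⟨by linarith, h0⟩, by linarith, h0c⟩, ?_⟩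
    ext i
    fin_cases i <;> simp [← hsum]
  · rintro ⟨x, ⟨⟨hx₂, hx₀⟩, hxa, hx₁⟩, rfl⟩
    simp only [Matrix.cons_val_zero, Matrix.cons_val_one]
    refine ⟨by ring, ⟨hx₀, hx₁⟩, ?_, ?_⟩ <;> linarith

theorem stmt5_general (c₁ c₂ ra : ℝ) (hc0 : 0 ≤ c₁) (hc : c₁ ≤ c₂)
    (hra0 : 0 ≤ ra) (hraC : ra ≤ c₁ + c₂)
    (f : Fin 2 → ℝ) :
    sSup ((fun fa => Blocked ![c₁, c₂] f fa) '' Feas ![c₁, c₂] ra) =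
      max (Blocked ![c₁, c₂] f ![min ra c₁, max (ra - c₁) 0])
          (Blocked ![c₁, c₂] f ![max (ra - c₂) 0, min ra c₂]) := by
  have hLR : max (ra - c₂) 0 ≤ min ra c₁ :=
    max_le (le_min (by linarith) (by linarith)) (le_min hra0 hc0)
  have hR : ra - min ra c₁ = max (ra - c₁) 0 := by
    rw [← max_sub_sub_left, sub_self, max_comm]
  have hL : ra - max (ra - c₂) 0 = min ra c₂ := by
    rw [← min_sub_sub_left, sub_sub_cancel, sub_zero, min_comm]
  have hconv := ((convexOn_blocked ![c₁, c₂] f).comp_affineMap (splitAttack ra)).subset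
    (subset_univ (Icc (max (ra - c₂) 0) (min ra c₁))) (convex_Icc _ _)
  rw [feas_two_link_eq_image, ← image_comp, hconv.sSup_image_Icc hLR, max_comm]
  simp only [Function.comp_apply, splitAttack_apply, hR, hL]

/-- In a two-link network, the attacker's best-response value against any
routing `f` is attained by one of the two extreme attacks `f^{a1}(ra)` or `f^{a2}(ra)`. -/
theorem stmt5 (c₁ c₂ r ra : ℝ) (hc0 : 0 ≤ c₁) (hc : c₁ ≤ c₂)
    (hr0 : 0 ≤ r) (hrC : r ≤ c₁ + c₂) (hra0 : 0 ≤ ra) (hraC : ra ≤ c₁ + c₂)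
    (f : Fin 2 → ℝ) (hf : f ∈ Feas ![c₁, c₂] r) :
    sSup ((fun fa => Blocked ![c₁, c₂] f fa) '' Feas ![c₁, c₂] ra) =
      max (Blocked ![c₁, c₂] f ![min ra c₁, max (ra - c₁) 0])
          (Blocked ![c₁, c₂] f ![max (ra - c₂) 0, min ra c₂]) :=
  stmt5_general c₁ c₂ ra hc0 hc hra0 hraC f
end
end

section
/- Consider a two-link parallel network with capacities 0 ≤ c_1 ≤ c_2, let 0 ≤ r ≤ c_1 + c_2, let f ∈ F(c,r), and suppose c_1 ≤ r^a ≤ c_2. Then B*(f, r^a) = max{ f_1, r − f_1 + r^a − c_2 }. -/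
/-!
Against a fixed routing, any feasible attack blocks at most `f 0` on the first link and at most
`f 1 + ra - c₂` on the second, and when both links overflow the total is still bounded by the
latter since `f 0 ≤ c₁`. The two extreme attacks realise the two terms: filling the first link up
to `c₁` (possible since `c₁ ≤ ra`) blocks all of `f 0`, and putting the whole budget on the second
link (possible since `ra ≤ c₂`) blocks `f 1 + ra - c₂`.
-/

open Finset

noncomputable section

section Bstar

variable {E : Type*} [Fintype E] {c f : E → ℝ} {ra M : ℝ}

theorem bstar_le (hne : (Feas c ra).Nonempty) (h : ∀ fa ∈ Feas c ra, Blocked c f fa ≤ M) :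
    Bstar c f ra ≤ M :=
  csSup_le (hne.image _) (Set.forall_mem_image.2 h)

theorem blocked_le_bstar (h : ∀ fa ∈ Feas c ra, Blocked c f fa ≤ M) {fa : E → ℝ}
    (hfa : fa ∈ Feas c ra) : Blocked c f fa ≤ Bstar c f ra :=
  le_csSup ⟨M, Set.forall_mem_image.2 h⟩ (Set.mem_image_of_mem _ hfa)

end Bstar

section TwoLink

variable {c₁ c₂ r ra : ℝ} {f fa : Fin 2 → ℝ}

theorem mem_feas_two :
    f ∈ Feas ![c₁, c₂] r ↔ f 0 + f 1 = r ∧ 0 ≤ f 0 ∧ f 0 ≤ c₁ ∧ 0 ≤ f 1 ∧ f 1 ≤ c₂ := by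
  simp [Feas, Fin.sum_univ_two, Fin.forall_fin_two, and_assoc]

theorem vec_mem_feas_two {a b : ℝ} :
    ![a, b] ∈ Feas ![c₁, c₂] r ↔ a + b = r ∧ 0 ≤ a ∧ a ≤ c₁ ∧ 0 ≤ b ∧ b ≤ c₂ :=
  mem_feas_two

theorem blocked_two :
    Blocked ![c₁, c₂] f fa = max (f 0 + fa 0 - c₁) 0 + max (f 1 + fa 1 - c₂) 0 := by
  simp [Blocked, Fin.sum_univ_two]

theorem blocked_two_le (hf : f ∈ Feas ![c₁, c₂] r) (hfa : fa ∈ Feas ![c₁, c₂] ra) :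
    Blocked ![c₁, c₂] f fa ≤ max (f 0) (f 1 + ra - c₂) := by
  obtain ⟨-, hf0, hf0c, -, hf1c⟩ := mem_feas_two.1 hf
  obtain ⟨hsum, ha0, ha0c, ha1, -⟩ := mem_feas_two.1 hfa
  rw [blocked_two]
  rcases max_cases (f 0 + fa 0 - c₁) 0 with ⟨h₀, -⟩ | ⟨h₀, -⟩ <;>
    rcases max_cases (f 1 + fa 1 - c₂) 0 with ⟨h₁, -⟩ | ⟨h₁, -⟩ <;>
    rw [h₀, h₁] <;>
    first | exact le_max_of_le_left (by linarith) | exact le_max_of_le_right (by linarith)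

theorem le_blocked_fill_first :
    f 0 ≤ Blocked ![c₁, c₂] f ![c₁, ra - c₁] := by
  rw [blocked_two]
  simp only [Matrix.cons_val_zero, Matrix.cons_val_one, add_sub_cancel_right]
  exact le_add_of_le_of_nonneg (le_max_left _ _) (le_max_right _ _)

theorem le_blocked_all_second : f 1 + ra - c₂ ≤ Blocked ![c₁, c₂] f ![0, ra] := by
  rw [blocked_two]
  simp only [Matrix.cons_val_one, Matrix.cons_val_zero]
  exact le_add_of_nonneg_of_le (le_max_right _ _) (le_max_left _ _)

end TwoLink

theorem stmt6_general (c₁ c₂ r ra : ℝ)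
    (f : Fin 2 → ℝ) (hf : f ∈ Feas ![c₁, c₂] r)
    (hra1 : c₁ ≤ ra) (hra2 : ra ≤ c₂) :
    Bstar ![c₁, c₂] f ra = max (f 0) (r - f 0 + ra - c₂) := by
  obtain ⟨hsum, hf0, hf0c, -, -⟩ := mem_feas_two.1 hf
  rw [← hsum, add_sub_cancel_left]
  have hub : ∀ fa ∈ Feas ![c₁, c₂] ra, Blocked ![c₁, c₂] f fa ≤ max (f 0) (f 1 + ra - c₂) :=
    fun _ => blocked_two_le hf
  have hfill : ![c₁, ra - c₁] ∈ Feas ![c₁, c₂] ra :=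
    vec_mem_feas_two.2 ⟨by ring, by linarith, le_rfl, by linarith, by linarith⟩
  have hsecond : ![0, ra] ∈ Feas ![c₁, c₂] ra :=
    vec_mem_feas_two.2 ⟨zero_add ra, le_rfl, by linarith, by linarith, hra2⟩
  refine le_antisymm (bstar_le ⟨_, hsecond⟩ hub) (max_le ?_ ?_)
  · exact le_blocked_fill_first.trans (blocked_le_bstar hub hfill)
  · exact le_blocked_all_second.trans (blocked_le_bstar hub hsecond)

/-- In a two-link network with `c₁ ≤ ra ≤ c₂`, the attacker's best-response
value is `max{f₁, r - f₁ + ra - c₂}`. -/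
theorem stmt6 (c₁ c₂ r ra : ℝ) (hc0 : 0 ≤ c₁) (hc : c₁ ≤ c₂)
    (hr0 : 0 ≤ r) (hrC : r ≤ c₁ + c₂)
    (f : Fin 2 → ℝ) (hf : f ∈ Feas ![c₁, c₂] r)
    (hra1 : c₁ ≤ ra) (hra2 : ra ≤ c₂) :
    Bstar ![c₁, c₂] f ra = max (f 0) (r - f 0 + ra - c₂) :=
  stmt6_general c₁ c₂ r ra f hf hra1 hra2
end
end

section
/- Let E be a parallel network with capacities c, f ∈ F(c,r), and f^a ∈ F^a(c,r^a). If there exist edges e, e' ∈ E with f_e + f^a_e > c_e and f_{e'} + f^a_{e'} < c_{e'}, then f does not minimize B(·, f^a) over F(c,r): there exists f̄ ∈ F(c,r) with B(f̄, f^a) < B(f, f^a). In particular, (f, f^a) is not a Nash equilibrium. -/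
open Finset

noncomputable section

/-! Moving `ε = min (f e + fa e - c e) (c e' - f e' - fa e')` units of traffic from the overloaded
edge `e` to the underloaded edge `e'` keeps the routing feasible, lowers the blocked traffic on `e`
by `ε`, and leaves `e'` unsaturated, so the blocked traffic drops by exactly `ε`. -/

section MoveFlow

variable {E : Type*} [DecidableEq E]

def moveFlow (f : E → ℝ) (e e' : E) (ε : ℝ) : E → ℝ :=
  f - Pi.single e ε + Pi.single e' ε

variable {f : E → ℝ} {e e' : E} {ε : ℝ}

theorem sum_moveFlow [Fintype E] : ∑ x, moveFlow f e e' ε x = ∑ x, f x := by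
  simp [moveFlow, sum_add_distrib, sum_sub_distrib]

theorem moveFlow_apply_left (hne : e ≠ e') : moveFlow f e e' ε e = f e - ε := by
  simp [moveFlow, hne.symm]

theorem moveFlow_apply_right (hne : e ≠ e') : moveFlow f e e' ε e' = f e' + ε := by
  simp [moveFlow, hne.symm]

theorem moveFlow_apply_of_ne {x : E} (hxe : x ≠ e) (hxe' : x ≠ e') :
    moveFlow f e e' ε x = f x := by
  simp [moveFlow, hxe, hxe']

theorem moveFlow_mem_feas [Fintype E] {c : E → ℝ} {r : ℝ} (hf : f ∈ Feas c r) (hne : e ≠ e')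
    (hε : 0 ≤ ε) (hεe : ε ≤ f e) (hεe' : ε ≤ c e' - f e') : moveFlow f e e' ε ∈ Feas c r := by
  refine ⟨sum_moveFlow.trans hf.1, fun x => ?_⟩
  obtain ⟨hx0, hxc⟩ := hf.2 x
  by_cases hxe : x = e
  · subst hxe
    rw [moveFlow_apply_left hne]
    constructor <;> linarith
  by_cases hxe' : x = e'
  · subst hxe'
    rw [moveFlow_apply_right hne]
    constructor <;> linarith
  rw [moveFlow_apply_of_ne hxe hxe']
  exact ⟨hx0, hxc⟩

theorem blocked_moveFlow [Fintype E] {c fa : E → ℝ} (hne : e ≠ e') (hε : 0 ≤ ε)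
    (hεe : ε ≤ f e + fa e - c e) (hεe' : ε ≤ c e' - f e' - fa e') :
    Blocked c (moveFlow f e e' ε) fa = Blocked c f fa - ε := by
  have hedge : ∀ x, max (moveFlow f e e' ε x + fa x - c x) 0
      = max (f x + fa x - c x) 0 - (Pi.single e ε : E → ℝ) x := by
    intro x
    by_cases hxe : x = e
    · subst hxe
      rw [moveFlow_apply_left hne, Pi.single_eq_same, max_eq_left (by linarith),
        max_eq_left (by linarith)]
      ring
    by_cases hxe' : x = e'
    · subst hxe'
      rw [moveFlow_apply_right hne, Pi.single_eq_of_ne hxe, max_eq_right (by linarith),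
        max_eq_right (by linarith), sub_zero]
    rw [moveFlow_apply_of_ne hxe hxe', Pi.single_eq_of_ne hxe, sub_zero]
  simp only [Blocked, hedge, sum_sub_distrib, sum_pi_single', if_pos (mem_univ e)]

end MoveFlow

theorem not_isNash_of_blocked_lt {E : Type*} [Fintype E] {c : E → ℝ} {r ra : ℝ}
    {f fa f' : E → ℝ} (hf' : f' ∈ Feas c r) (hlt : Blocked c f' fa < Blocked c f fa) :
    ¬ IsNash c r ra f fa :=
  fun hNash => (hNash.2.2.1 f' hf').not_gt hlt

theorem stmt10_general {E : Type*} [Fintype E]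
    (c : E → ℝ) (r ra : ℝ)
    (f fa : E → ℝ) (hf : f ∈ Feas c r) (hfa : fa ∈ Feas c ra)
    (e e' : E) (h1 : c e < f e + fa e) (h2 : f e' + fa e' < c e') :
    (∃ f' ∈ Feas c r, Blocked c f' fa < Blocked c f fa) ∧ ¬ IsNash c r ra f fa := by
  classical
  have hne : e ≠ e' := by rintro rfl; linarith
  have hfae := (hfa.2 e).2
  have hfae' := (hfa.2 e').1
  set ε := min (f e + fa e - c e) (c e' - f e' - fa e')
  have hε : 0 < ε := lt_min (by linarith) (by linarith)
  have hεe : ε ≤ f e + fa e - c e := min_le_left _ _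
  have hεe' : ε ≤ c e' - f e' - fa e' := min_le_right _ _
  have hmem : moveFlow f e e' ε ∈ Feas c r :=
    moveFlow_mem_feas hf hne hε.le (by linarith) (by linarith)
  have hlt : Blocked c (moveFlow f e e' ε) fa < Blocked c f fa := by
    rw [blocked_moveFlow hne hε.le hεe hεe']
    linarith
  exact ⟨⟨_, hmem, hlt⟩, not_isNash_of_blocked_lt hmem hlt⟩

/-- If one edge is over capacity and another is strictly under capacity,
then `f` is not a best response to `fa`, so `(f, fa)` is not a Nash equilibrium. -/
theorem stmt10 {E : Type*} [Fintype E] [Nonempty E]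
    (c : E → ℝ) (hc : ∀ e, 0 ≤ c e) (r ra : ℝ)
    (f fa : E → ℝ) (hf : f ∈ Feas c r) (hfa : fa ∈ Feas c ra)
    (e e' : E) (h1 : c e < f e + fa e) (h2 : f e' + fa e' < c e') :
    (∃ f' ∈ Feas c r, Blocked c f' fa < Blocked c f fa) ∧ ¬ IsNash c r ra f fa :=
  stmt10_general c r ra f fa hf hfa e e' h1 h2
end
end

section
/- Let E be a parallel network with capacities c and let 0 ≤ r ≤ C(E). Define g := max_{∅≠E'⊆E} (C(E') − r)/|E'| and the routing profile f^lo by f^lo_e := max{ c_e − g, 0 }. Then f^lo is feasible: Σ_{e∈E} f^lo_e = r and 0 ≤ f^lo_e ≤ c_e for all e, i.e., f^lo ∈ F(c,r). -/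
/-!
The sum of positive parts `φ(t) = ∑ₑ max (cₑ - t) 0` is the largest of the sums
`∑ₑ∈ₛ (cₑ - t)` over all `s ⊆ E`, attained at `s = {e | t < cₑ}`. By definition of `g`,
`C(s) - |s| g ≤ r` for every nonempty `s`, with equality at a maximising `s`; the empty set
gives `0 ≤ r`. Hence `φ(g) = r`. Taking `E' = E` shows `g ≥ 0`, so `f^lo ≤ c`.
-/

open Finset

noncomputable section

section PositivePart

variable {E : Type*} [Fintype E]

theorem sum_le_sum_max_zero (f : E → ℝ) (s : Finset E) :
    ∑ e ∈ s, f e ≤ ∑ e, max (f e) 0 :=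
  calc ∑ e ∈ s, f e ≤ ∑ e ∈ s, max (f e) 0 := sum_le_sum fun _ _ => le_max_left _ _
    _ ≤ ∑ e, max (f e) 0 :=
      sum_le_sum_of_subset_of_nonneg (subset_univ s) fun _ _ _ => le_max_right _ _

theorem sum_max_zero_eq_sum_filter_pos (f : E → ℝ) :
    ∑ e, max (f e) 0 = ∑ e ∈ univ.filter (fun e => 0 < f e), f e := by
  rw [sum_filter]
  refine sum_congr rfl fun e _ => ?_
  split_ifs with h
  · exact max_eq_left h.le
  · exact max_eq_right (not_lt.mp h)

end PositivePart

section Threshold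

variable {E : Type*} [Fintype E] [Nonempty E]

theorem div_card_le_gval (c : E → ℝ) (r : ℝ) {s : Finset E} (hs : s.Nonempty) :
    ((∑ e ∈ s, c e) - r) / s.card ≤ gval c r :=
  le_sup' (fun s : Finset E => ((∑ e ∈ s, c e) - r) / s.card) (by simp [hs])

theorem exists_gval_eq (c : E → ℝ) (r : ℝ) :
    ∃ s : Finset E, s.Nonempty ∧ gval c r = ((∑ e ∈ s, c e) - r) / s.card := by
  obtain ⟨s, hs, hmax⟩ := exists_mem_eq_sup' _ (fun s : Finset E => ((∑ e ∈ s, c e) - r) / s.card)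
  exact ⟨s, (mem_filter.mp hs).2, hmax⟩

theorem gval_nonneg {c : E → ℝ} {r : ℝ} (hrC : r ≤ ∑ e, c e) : 0 ≤ gval c r :=
  (div_nonneg (sub_nonneg.mpr hrC) (Nat.cast_nonneg _)).trans (div_card_le_gval c r univ_nonempty)

theorem sum_sub_gval_le {c : E → ℝ} {r : ℝ} (hr0 : 0 ≤ r) (s : Finset E) :
    ∑ e ∈ s, (c e - gval c r) ≤ r := by
  rw [sum_sub_distrib, sum_const, nsmul_eq_mul]
  rcases s.eq_empty_or_nonempty with rfl | hs
  · simpa using hr0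
  · have hcard : (0 : ℝ) < s.card := Nat.cast_pos.mpr hs.card_pos
    have := div_card_le_gval c r hs
    rw [div_le_iff₀ hcard] at this
    linarith

theorem exists_sum_sub_gval_eq (c : E → ℝ) (r : ℝ) :
    ∃ s : Finset E, ∑ e ∈ s, (c e - gval c r) = r := by
  obtain ⟨s, hs, hg⟩ := exists_gval_eq c r
  have hcard : (s.card : ℝ) ≠ 0 := Nat.cast_ne_zero.mpr hs.card_pos.ne'
  refine ⟨s, ?_⟩
  rw [sum_sub_distrib, sum_const, nsmul_eq_mul, hg]
  field_simp
  ring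

theorem sum_max_sub_gval_zero {c : E → ℝ} {r : ℝ} (hr0 : 0 ≤ r) :
    ∑ e, max (c e - gval c r) 0 = r := by
  refine le_antisymm ?_ ?_
  · rw [sum_max_zero_eq_sum_filter_pos]
    exact sum_sub_gval_le hr0 _
  · obtain ⟨s, hs⟩ := exists_sum_sub_gval_eq c r
    calc r = ∑ e ∈ s, (c e - gval c r) := hs.symm
      _ ≤ _ := sum_le_sum_max_zero _ s

end Threshold

/-- The routing profile `f^lo_e = max{c_e - g, 0}` is feasible, where
`g = max_{∅≠E'⊆E} (C(E') - r)/|E'|`. -/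
theorem stmt11 {E : Type*} [Fintype E] [Nonempty E]
    (c : E → ℝ) (hc : ∀ e, 0 ≤ c e) (r : ℝ) (hr0 : 0 ≤ r) (hrC : r ≤ ∑ e, c e) :
    (fun e => max (c e - gval c r) 0) ∈ Feas c r := by
  have hg := gval_nonneg (c := c) hrC
  exact ⟨sum_max_sub_gval_zero hr0,
    fun e => ⟨le_max_right _ _, max_le (by linarith) (hc e)⟩⟩
end
end

section
/- Let E be a parallel network with capacities c and let 0 ≤ r ≤ C(E). Define h := max_{∅≠E'⊆E} (r − C(E∖E'))/|E'| and the routing profile f^hi by f^hi_e := min{ c_e, h }. Then f^hi is feasible: Σ_{e∈E} f^hi_e = r and 0 ≤ f^hi_e ≤ c_e for all e, i.e., f^hi ∈ F(c,r). -/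
/-
Write `φ(t) = ∑ₑ min(cₑ, t)`. For every set `S` of edges, capping the edges of `S` at `t` and the
others at their capacities gives `φ(t) ≤ |S| t + C(E ∖ S)`, with equality for `S = {e | t ≤ cₑ}`;
so `φ(t)` is the least of these cut values. The definition of `h` says exactly that
`r ≤ |S| h + C(E ∖ S)` for every nonempty `S` (and `r ≤ C(E)` covers `S = ∅`), with equality for a
maximizing `S`. Hence `φ(h) = r`.
-/

open Finset

noncomputable section

section SumMin

variable {ι α : Type*} [Fintype ι] [DecidableEq ι] [AddCommMonoid α] [LinearOrder α]
  (c : ι → α) (t : α)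

theorem sum_min_le_card_nsmul_add_sum_sdiff [IsOrderedAddMonoid α] (s : Finset ι) :
    ∑ i, min (c i) t ≤ #s • t + ∑ i ∈ univ \ s, c i := by
  rw [← sum_sdiff (subset_univ s), add_comm, ← sum_const]
  exact add_le_add (sum_le_sum fun i _ => min_le_right _ _)
    (sum_le_sum fun i _ => min_le_left _ _)

theorem exists_sum_min_eq_card_nsmul_add_sum_sdiff :
    ∃ s : Finset ι, ∑ i, min (c i) t = #s • t + ∑ i ∈ univ \ s, c i := by
  refine ⟨univ.filter (t ≤ c ·), ?_⟩
  rw [← sum_sdiff (subset_univ _), add_comm, ← sum_const]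
  congr 1
  · exact sum_congr rfl fun i hi => min_eq_right (mem_filter.mp hi).2
  · refine sum_congr rfl fun i hi => min_eq_left ?_
    simp only [mem_sdiff, mem_univ, mem_filter, true_and] at hi
    exact (not_le.mp hi).le

end SumMin

section Hval

variable {E : Type*} [Fintype E] [Nonempty E] [DecidableEq E] (c : E → ℝ) (r : ℝ)

theorem le_hval {s : Finset E} (hs : s.Nonempty) :
    (r - ∑ e ∈ univ \ s, c e) / #s ≤ hval c r :=
  le_sup' (fun s : Finset E => (r - ∑ e ∈ univ \ s, c e) / #s)
    (mem_filter.mpr ⟨mem_powerset.mpr (subset_univ s), hs⟩)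

theorem exists_card_mul_hval_add_sum_sdiff_eq :
    ∃ s : Finset E, #s * hval c r + ∑ e ∈ univ \ s, c e = r := by
  obtain ⟨s, hs, hmax⟩ := exists_mem_eq_sup'
    ⟨univ, mem_filter.mpr ⟨mem_powerset_self _, univ_nonempty⟩⟩
    (fun s : Finset E => (r - ∑ e ∈ univ \ s, c e) / #s)
  have hs : s.Nonempty := (mem_filter.mp hs).2
  have hcard : (0 : ℝ) < #s := by exact_mod_cast hs.card_pos
  refine ⟨s, ?_⟩
  rw [hval, hmax, mul_div_cancel₀ _ hcard.ne']
  ring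

theorem le_card_mul_hval_add_sum_sdiff (hrC : r ≤ ∑ e, c e) (s : Finset E) :
    r ≤ #s * hval c r + ∑ e ∈ univ \ s, c e := by
  rcases s.eq_empty_or_nonempty with rfl | hs
  · simpa using hrC
  · have hcard : (0 : ℝ) < #s := by exact_mod_cast hs.card_pos
    have := le_hval c r hs
    rw [div_le_iff₀ hcard] at this
    linarith

theorem hval_nonneg (hr0 : 0 ≤ r) : 0 ≤ hval c r := by
  have := le_hval c r univ_nonempty
  rw [sdiff_self, bot_eq_empty, sum_empty, sub_zero] at this
  exact (div_nonneg hr0 (Nat.cast_nonneg _)).trans this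

theorem sum_min_hval (hrC : r ≤ ∑ e, c e) : ∑ e, min (c e) (hval c r) = r := by
  apply le_antisymm
  · obtain ⟨s, hs⟩ := exists_card_mul_hval_add_sum_sdiff_eq c r
    simpa only [nsmul_eq_mul, hs] using sum_min_le_card_nsmul_add_sum_sdiff c (hval c r) s
  · obtain ⟨s, hs⟩ := exists_sum_min_eq_card_nsmul_add_sum_sdiff c (hval c r)
    rw [hs, nsmul_eq_mul]
    exact le_card_mul_hval_add_sum_sdiff c r hrC s

end Hval

/-- The routing profile `f^hi_e = min{c_e, h}` is feasible, where
`h = max_{∅≠E'⊆E} (r - C(E∖E'))/|E'|`. -/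
theorem stmt12 {E : Type*} [Fintype E] [Nonempty E] [DecidableEq E]
    (c : E → ℝ) (hc : ∀ e, 0 ≤ c e) (r : ℝ) (hr0 : 0 ≤ r) (hrC : r ≤ ∑ e, c e) :
    (fun e => min (c e) (hval c r)) ∈ Feas c r :=
  ⟨sum_min_hval c r hrC, fun e => ⟨le_min (hc e) (hval_nonneg c r hr0), min_le_left _ _⟩⟩
end
end

section
/- Let E be a parallel network with capacities c, let 0 ≤ r ≤ C(E), define g := max_{∅≠E'⊆E} (C(E') − r)/|E'| and f^lo_e := max{ c_e − g, 0 }. If 0 ≤ r^a ≤ min{ g, C(E) }, then for every attack f^a ∈ F^a(c,r^a) and every edge e, f^lo_e + f^a_e ≤ c_e; consequently B(f^lo, f^a) = 0 for every f^a ∈ F^a(c,r^a). -/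
open Finset

noncomputable section

theorem apply_le_of_mem_Feas {E : Type*} [Fintype E] {c fa : E → ℝ} {ra : ℝ}
    (hfa : fa ∈ Feas c ra) (e : E) : fa e ≤ ra :=
  hfa.1 ▸ single_le_sum (fun i _ => (hfa.2 i).1) (mem_univ e)

theorem max_sub_zero_add_le {a b x : ℝ} (hxb : x ≤ b) (hxa : x ≤ a) : max (a - b) 0 + x ≤ a := by
  rw [← max_add_add_right]
  exact max_le (by linarith) (by linarith)

theorem blocked_eq_zero_of_forall_add_le {E : Type*} [Fintype E] {c f fa : E → ℝ}
    (h : ∀ e, f e + fa e ≤ c e) : Blocked c f fa = 0 :=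
  sum_eq_zero fun e _ => max_eq_right (sub_nonpos.mpr (h e))

theorem stmt13_general {E : Type*} [Fintype E] [Nonempty E]
    (c : E → ℝ) (r ra : ℝ) (hra : ra ≤ min (gval c r) (∑ e, c e)) :
    ∀ fa ∈ Feas c ra,
      (∀ e, max (c e - gval c r) 0 + fa e ≤ c e) ∧
        Blocked c (fun e => max (c e - gval c r) 0) fa = 0 := by
  intro fa hfa
  have hfree : ∀ e, max (c e - gval c r) 0 + fa e ≤ c e := fun e =>
    max_sub_zero_add_le ((apply_le_of_mem_Feas hfa e).trans (hra.trans (min_le_left _ _)))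
      (hfa.2 e).2
  exact ⟨hfree, blocked_eq_zero_of_forall_add_le hfree⟩

/-- If `0 ≤ ra ≤ min{g, C(E)}`, then under the routing `f^lo` no attack can
block any traffic. -/
theorem stmt13 {E : Type*} [Fintype E] [Nonempty E]
    (c : E → ℝ) (hc : ∀ e, 0 ≤ c e) (r ra : ℝ) (hr0 : 0 ≤ r) (hrC : r ≤ ∑ e, c e)
    (hra0 : 0 ≤ ra) (hra : ra ≤ min (gval c r) (∑ e, c e)) :
    ∀ fa ∈ Feas c ra,
      (∀ e, max (c e - gval c r) 0 + fa e ≤ c e) ∧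
        Blocked c (fun e => max (c e - gval c r) 0) fa = 0 :=
  stmt13_general c r ra hra
end
end

section
/- Let E be a parallel network with capacities c, let 0 < r ≤ C(E) and 0 ≤ r^a ≤ C(E), and suppose r^a > max_{∅≠E'⊆E} (C(E') − r)/|E'|. Then for every routing profile f ∈ F(c,r) there exists an attack f^a ∈ F^a(c,r^a) with B(f, f^a) > 0; consequently B^SE(r, r^a) > 0. -/
open Finset

noncomputable section

/-! Put `η = min r (ra - gval c r)`. For the set `A` of edges of capacity at least `ra`, the
definition of `gval` gives `C(A) - |A| ra ≤ r - |A| (ra - gval c r) ≤ r - η`, that is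
`∑ₑ (c e - ra)⁺ ≤ r - η`. Hence `∑ₑ (f e - (c e - ra)⁺) ≥ η` for every routing `f`, and some edge
`e₀` carries `f e₀ ≥ (c e₀ - ra)⁺ + η / |E|`. Attacking `e₀` with `min ra (c e₀)` and spending
the rest of the budget elsewhere blocks at least `η / |E|`. As this bound does not depend on `f`,
it also bounds `B^SE` from below. -/

section

variable {E : Type*} [Fintype E]

theorem le_gval [Nonempty E] (c : E → ℝ) (r : ℝ) {A : Finset E}
    (hA : A.Nonempty) : ((∑ e ∈ A, c e) - r) / A.card ≤ gval c r :=
  Finset.le_sup' (fun s : Finset E => ((∑ e ∈ s, c e) - r) / s.card) (by simp [hA])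

theorem sum_max_sub_add_min_le [Nonempty E] (c : E → ℝ) {r ra : ℝ}
    (hra : gval c r ≤ ra) : ∑ e, max (c e - ra) 0 + min r (ra - gval c r) ≤ r := by
  classical
  set A := univ.filter fun e => ra ≤ c e
  have hsplit : ∑ e, max (c e - ra) 0 = (∑ e ∈ A, c e) - A.card * ra := by
    rw [Finset.sum_filter, ← nsmul_eq_mul, ← Finset.sum_const, Finset.sum_filter,
      ← Finset.sum_sub_distrib]
    refine Finset.sum_congr rfl fun e _ => ?_
    split_ifs with h
    · exact max_eq_left (by linarith)
    · rw [sub_self]; exact max_eq_right (by linarith)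
  rw [hsplit]
  rcases A.eq_empty_or_nonempty with hA | hA
  · simp [hA]
  · have hcard : (1 : ℝ) ≤ A.card := by exact_mod_cast hA.card_pos
    have hgA := (div_le_iff₀ (by linarith)).1 (le_gval c r hA)
    nlinarith [min_le_right r (ra - gval c r)]

theorem exists_mem_Feas_apply_eq_min (c : E → ℝ) (hc : ∀ e, 0 ≤ c e)
    {s : ℝ} (hs0 : 0 ≤ s) (hsC : s ≤ ∑ e, c e) (e₀ : E) :
    ∃ g ∈ Feas c s, g e₀ = min s (c e₀) := by
  classical
  set m := min s (c e₀)
  set D := ∑ e, c e - c e₀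
  have hD : D = ∑ e ∈ univ \ {e₀}, c e := by
    rw [Finset.sdiff_singleton_eq_erase, Finset.sum_erase_eq_sub (Finset.mem_univ e₀)]
  have hsmD : 0 ≤ s - m ∧ s - m ≤ D := by
    constructor
    · linarith [min_le_left s (c e₀)]
    · rcases le_total s (c e₀) with h | h
      · simp only [m, min_eq_left h, sub_self, hD]
        exact Finset.sum_nonneg fun e _ => hc e
      · simp only [m, min_eq_right h, D]; linarith
  -- the rest of the budget is spread over the other edges proportionally to their capacities
  set t := (s - m) / D
  have hD0 : 0 ≤ D := hsmD.1.trans hsmD.2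
  have ht : 0 ≤ t ∧ t ≤ 1 := ⟨div_nonneg hsmD.1 hD0, div_le_one_of_le₀ hsmD.2 hD0⟩
  have htD : t * D = s - m := by
    rcases eq_or_ne D 0 with h | h
    · rw [h, mul_zero]; linarith [hsmD.2]
    · exact div_mul_cancel₀ _ h
  refine ⟨Function.update (fun e => t * c e) e₀ m, ⟨?_, fun e => ?_⟩, by simp⟩
  · rw [Finset.sum_update_of_mem (Finset.mem_univ e₀), ← Finset.mul_sum, ← hD, htD]; ring
  · rcases eq_or_ne e e₀ with rfl | he
    · simp only [Function.update_self]
      exact ⟨le_min hs0 (hc e), min_le_right _ _⟩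
    · simp only [Function.update_of_ne he]
      exact ⟨mul_nonneg ht.1 (hc e), mul_le_of_le_one_left (hc e) ht.2⟩

theorem sub_max_sub_le_Blocked (c f fa : E → ℝ) {ra : ℝ} (e₀ : E)
    (he₀ : fa e₀ = min ra (c e₀)) : f e₀ - max (c e₀ - ra) 0 ≤ Blocked c f fa := by
  have hsingle : max (f e₀ + fa e₀ - c e₀) 0 ≤ Blocked c f fa :=
    Finset.single_le_sum (f := fun e => max (f e + fa e - c e) 0)
      (fun _ _ => le_max_right _ _) (Finset.mem_univ e₀)
  refine le_trans ?_ hsingle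
  rw [he₀]
  rcases le_total ra (c e₀) with h | h
  · rw [min_eq_left h, max_eq_left (by linarith)]; exact le_max_of_le_left (by linarith)
  · rw [min_eq_right h, max_eq_right (by linarith)]; exact le_max_of_le_left (by linarith)

theorem Blocked_le_sum {c f fa : E → ℝ} (hf : ∀ e, f e ≤ c e)
    (hfa : ∀ e, 0 ≤ fa e) : Blocked c f fa ≤ ∑ e, fa e :=
  Finset.sum_le_sum fun e _ => max_le (by linarith [hf e]) (hfa e)

theorem Blocked_le_Bstar {c f fa : E → ℝ} {ra : ℝ}
    (hf : ∀ e, f e ≤ c e) (hfa : fa ∈ Feas c ra) : Blocked c f fa ≤ Bstar c f ra := by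
  refine le_csSup ⟨ra, ?_⟩ ⟨fa, hfa, rfl⟩
  rintro _ ⟨fa', hfa', rfl⟩
  exact hfa'.1 ▸ Blocked_le_sum hf fun e => (hfa'.2 e).1

theorem exists_attack_le_Blocked [Nonempty E] (c : E → ℝ)
    (hc : ∀ e, 0 ≤ c e) {r ra : ℝ} (hra0 : 0 ≤ ra) (hraC : ra ≤ ∑ e, c e)
    (hra : gval c r ≤ ra) {f : E → ℝ} (hf : f ∈ Feas c r) :
    ∃ fa ∈ Feas c ra, min r (ra - gval c r) / Fintype.card E ≤ Blocked c f fa := by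
  have hslack : ∑ _e : E, min r (ra - gval c r) / Fintype.card E
      ≤ ∑ e, (f e - max (c e - ra) 0) := by
    rw [Finset.sum_const, Finset.card_univ, nsmul_eq_mul,
      mul_div_cancel₀ _ (by exact_mod_cast Fintype.card_ne_zero), Finset.sum_sub_distrib, hf.1]
    linarith [sum_max_sub_add_min_le c hra]
  obtain ⟨e₀, -, he₀⟩ := Finset.exists_le_of_sum_le Finset.univ_nonempty hslack
  obtain ⟨fa, hfa, hfae₀⟩ := exists_mem_Feas_apply_eq_min c hc hra0 hraC e₀
  exact ⟨fa, hfa, he₀.trans (sub_max_sub_le_Blocked c f fa e₀ hfae₀)⟩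

end

/-- If `ra > max_{∅≠E'⊆E} (C(E') - r)/|E'|`, then against every routing
profile some attack blocks a positive amount of traffic; hence `B^SE(r, ra) > 0`. -/
theorem stmt15 {E : Type*} [Fintype E] [Nonempty E]
    (c : E → ℝ) (hc : ∀ e, 0 ≤ c e) (r ra : ℝ)
    (hr0 : 0 < r) (hrC : r ≤ ∑ e, c e) (hra0 : 0 ≤ ra) (hraC : ra ≤ ∑ e, c e)
    (hra : gval c r < ra) :
    (∀ f ∈ Feas c r, ∃ fa ∈ Feas c ra, 0 < Blocked c f fa) ∧ 0 < BSE c r ra := by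
  set δ := min r (ra - gval c r) / Fintype.card E
  have hδ : 0 < δ := div_pos (lt_min hr0 (by linarith)) (by exact_mod_cast Fintype.card_pos)
  have hattack := fun f (hf : f ∈ Feas c r) =>
    exists_attack_le_Blocked c hc hra0 hraC hra.le hf
  refine ⟨fun f hf => ?_, hδ.trans_le ?_⟩
  · obtain ⟨fa, hfa, hblock⟩ := hattack f hf
    exact ⟨fa, hfa, hδ.trans_le hblock⟩
  · obtain ⟨f₀, hf₀, -⟩ := exists_mem_Feas_apply_eq_min c hc hr0.le hrC (Classical.arbitrary E)
    refine le_csInf ⟨_, f₀, hf₀, rfl⟩ ?_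
    rintro _ ⟨f, hf, rfl⟩
    obtain ⟨fa, hfa, hblock⟩ := hattack f hf
    exact hblock.trans (Blocked_le_Bstar (fun e => (hf.2 e).2) hfa)
end
end

section
/- Let E be a parallel network with capacities c and let 0 ≤ r ≤ C(E). Then the function r^a ↦ B^SE(r, r^a) is nondecreasing and 1-Lipschitz on [0, C(E)]: for all 0 ≤ r^a ≤ r̂^a ≤ C(E), 0 ≤ B^SE(r, r̂^a) − B^SE(r, r^a) ≤ r̂^a − r^a. -/
open Finset

noncomputable section

/-!
For a fixed routing `f`, the attacker's value `Bstar c f ·` is nondecreasing and 1-Lipschitz.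
Feasible profiles of two budgets can be matched pointwise-comparably (interpolate between a
feasible profile and `c`, or between `0` and it); a larger attack blocks no less, and each unit of
attack blocks at most one unit of traffic. Both properties survive the infimum over routings `f`.
-/

section Extrema

variable {α : Type*}

theorem csSup_image_le_csSup_image_add {s t : Set α} {g h : α → ℝ} {d : ℝ} (hs : s.Nonempty)
    (hb : BddAbove (h '' t)) (H : ∀ x ∈ s, ∃ y ∈ t, g x ≤ h y + d) :
    sSup (g '' s) ≤ sSup (h '' t) + d := by
  refine csSup_le (hs.image g) ?_
  rintro _ ⟨x, hx, rfl⟩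
  obtain ⟨y, hy, hxy⟩ := H x hx
  linarith [le_csSup hb (Set.mem_image_of_mem h hy)]

theorem csInf_image_le_csInf_image_add {s : Set α} {g h : α → ℝ} {d : ℝ} (hs : s.Nonempty)
    (hb : BddBelow (h '' s)) (H : ∀ x ∈ s, h x ≤ g x + d) :
    sInf (h '' s) ≤ sInf (g '' s) + d := by
  rw [← sub_le_iff_le_add]
  refine le_csInf (hs.image g) ?_
  rintro _ ⟨x, hx, rfl⟩
  linarith [csInf_le hb (Set.mem_image_of_mem h hx), H x hx]

theorem csSup_image_le_csSup_image {s t : Set α} {g h : α → ℝ} (hs : s.Nonempty)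
    (hb : BddAbove (h '' t)) (H : ∀ x ∈ s, ∃ y ∈ t, g x ≤ h y) :
    sSup (g '' s) ≤ sSup (h '' t) := by
  simpa using csSup_image_le_csSup_image_add (d := 0) hs hb (by simpa using H)

theorem csInf_image_le_csInf_image {s : Set α} {g h : α → ℝ} (hs : s.Nonempty)
    (hb : BddBelow (g '' s)) (H : ∀ x ∈ s, g x ≤ h x) :
    sInf (g '' s) ≤ sInf (h '' s) := by
  simpa using csInf_image_le_csInf_image_add (d := 0) hs hb (by simpa using H)

end Extrema

section ParallelNetwork

variable {E : Type*} [Fintype E]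

theorem blocked_nonneg (c f fa : E → ℝ) : 0 ≤ Blocked c f fa :=
  sum_nonneg fun _ _ => le_max_right _ _

theorem blocked_le_sum {c f fa : E → ℝ} (hf : f ≤ c) (hfa : 0 ≤ fa) :
    Blocked c f fa ≤ ∑ e, fa e :=
  sum_le_sum fun e _ => max_le (by linarith [hf e]) (hfa e)

theorem blocked_mono {c f fa fb : E → ℝ} (h : fa ≤ fb) : Blocked c f fa ≤ Blocked c f fb :=
  sum_le_sum fun e _ => max_le_max (by linarith [h e]) le_rfl

theorem blocked_le_add_sum_sub {c f fa fb : E → ℝ} (h : fa ≤ fb) :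
    Blocked c f fb ≤ Blocked c f fa + ∑ e, (fb e - fa e) := by
  rw [Blocked, Blocked, ← sum_add_distrib]
  refine sum_le_sum fun e _ => max_le ?_ ?_ <;>
    linarith [h e, le_max_left (f e + fa e - c e) 0, le_max_right (f e + fa e - c e) 0]

theorem sum_eq_of_mem_feas {c f : E → ℝ} {r : ℝ} (hf : f ∈ Feas c r) : ∑ e, f e = r := hf.1

theorem nonneg_of_mem_feas {c f : E → ℝ} {r : ℝ} (hf : f ∈ Feas c r) : 0 ≤ f :=
  fun e => (hf.2 e).1

theorem le_of_mem_feas {c f : E → ℝ} {r : ℝ} (hf : f ∈ Feas c r) : f ≤ c :=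
  fun e => (hf.2 e).2

/-- The witness is `g + t • (h - g)`; when `∑ h = ∑ g` the junk value `x / 0 = 0` gives `t = 0`. -/
theorem exists_mem_feas_between {c g h : E → ℝ} (hg : 0 ≤ g) (hgh : g ≤ h) (hhc : h ≤ c)
    {r : ℝ} (hgr : ∑ e, g e ≤ r) (hrh : r ≤ ∑ e, h e) :
    ∃ f ∈ Feas c r, g ≤ f ∧ f ≤ h := by
  set t := (r - ∑ e, g e) / (∑ e, h e - ∑ e, g e)
  have ht0 : 0 ≤ t := div_nonneg (by linarith) (by linarith)
  have ht1 : t ≤ 1 := div_le_one_of_le₀ (by linarith) (by linarith)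
  have hsum : ∑ e, g e + t * (∑ e, h e - ∑ e, g e) = r := by
    rcases eq_or_ne (∑ e, h e - ∑ e, g e) 0 with hD | hD
    · rw [hD, mul_zero]; linarith
    · rw [div_mul_cancel₀ _ hD]; ring
  have hlo : ∀ e, g e ≤ g e + t * (h e - g e) :=
    fun e => le_add_of_nonneg_right (mul_nonneg ht0 (sub_nonneg.mpr (hgh e)))
  have hhi : ∀ e, g e + t * (h e - g e) ≤ h e := fun e => by
    nlinarith [mul_le_mul_of_nonneg_right ht1 (sub_nonneg.mpr (hgh e))]
  refine ⟨fun e => g e + t * (h e - g e), ⟨?_, fun e => ⟨?_, ?_⟩⟩, hlo, hhi⟩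
  · rw [sum_add_distrib, ← mul_sum, sum_sub_distrib, hsum]
  · exact (hg e).trans (hlo e)
  · exact (hhi e).trans (hhc e)

theorem feas_nonempty_s18 {c : E → ℝ} (hc : 0 ≤ c) {r : ℝ} (hr0 : 0 ≤ r) (hrC : r ≤ ∑ e, c e) :
    (Feas c r).Nonempty := by
  obtain ⟨f, hf, -⟩ := exists_mem_feas_between le_rfl hc le_rfl (by simpa using hr0) hrC
  exact ⟨f, hf⟩

theorem bddAbove_blocked_image_feas {c f : E → ℝ} (hf : f ≤ c) (ra : ℝ) :
    BddAbove ((fun fa => Blocked c f fa) '' Feas c ra) := by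
  refine ⟨ra, ?_⟩
  rintro _ ⟨fa, hfa, rfl⟩
  exact (sum_eq_of_mem_feas hfa) ▸ blocked_le_sum hf (nonneg_of_mem_feas hfa)

theorem bstar_nonneg_s18 {c f : E → ℝ} (hf : f ≤ c) {ra : ℝ} (hne : (Feas c ra).Nonempty) :
    0 ≤ Bstar c f ra := by
  obtain ⟨fa, hfa⟩ := hne
  exact (blocked_nonneg c f fa).trans
    (le_csSup (bddAbove_blocked_image_feas hf ra) (Set.mem_image_of_mem _ hfa))

theorem bstar_mono {c f : E → ℝ} (hf : f ≤ c) {ra ra' : ℝ} (hle : ra ≤ ra')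
    (hra' : ra' ≤ ∑ e, c e) (hne : (Feas c ra).Nonempty) :
    Bstar c f ra ≤ Bstar c f ra' :=
  csSup_image_le_csSup_image hne (bddAbove_blocked_image_feas hf ra') fun fa hfa => by
    obtain ⟨fa', hfa', hle', -⟩ := exists_mem_feas_between (nonneg_of_mem_feas hfa)
      (le_of_mem_feas hfa) le_rfl ((sum_eq_of_mem_feas hfa).trans_le hle) hra'
    exact ⟨fa', hfa', blocked_mono hle'⟩

theorem bstar_le_add_sub {c f : E → ℝ} (hf : f ≤ c) {ra ra' : ℝ} (hra : 0 ≤ ra)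
    (hle : ra ≤ ra') (hne : (Feas c ra').Nonempty) :
    Bstar c f ra' ≤ Bstar c f ra + (ra' - ra) :=
  csSup_image_le_csSup_image_add hne (bddAbove_blocked_image_feas hf ra) fun fb hfb => by
    obtain ⟨fa, hfa, -, hle'⟩ := exists_mem_feas_between le_rfl (nonneg_of_mem_feas hfb)
      (le_of_mem_feas hfb) (by simpa using hra) (hle.trans_eq (sum_eq_of_mem_feas hfb).symm)
    refine ⟨fa, hfa, ?_⟩
    have := blocked_le_add_sum_sub (c := c) (f := f) hle'
    rwa [sum_sub_distrib, sum_eq_of_mem_feas hfa, sum_eq_of_mem_feas hfb] at this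

theorem bddBelow_bstar_image_feas {c : E → ℝ} (r : ℝ) {ra : ℝ} (hne : (Feas c ra).Nonempty) :
    BddBelow ((fun f => Bstar c f ra) '' Feas c r) := by
  refine ⟨0, ?_⟩
  rintro _ ⟨f, hf, rfl⟩
  exact bstar_nonneg_s18 (le_of_mem_feas hf) hne

end ParallelNetwork

theorem stmt18_general {E : Type*} [Fintype E]
    (c : E → ℝ) (hc : ∀ e, 0 ≤ c e) (r : ℝ) (hr0 : 0 ≤ r) (hrC : r ≤ ∑ e, c e) :
    ∀ ra ra' : ℝ, 0 ≤ ra → ra ≤ ra' → ra' ≤ ∑ e, c e →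
      0 ≤ BSE c r ra' - BSE c r ra ∧ BSE c r ra' - BSE c r ra ≤ ra' - ra := by
  intro ra ra' hra hle hra'
  have hc' : 0 ≤ c := hc
  have hF : (Feas c r).Nonempty := feas_nonempty_s18 hc' hr0 hrC
  have hFa : (Feas c ra).Nonempty := feas_nonempty_s18 hc' hra (hle.trans hra')
  have hFa' : (Feas c ra').Nonempty := feas_nonempty_s18 hc' (hra.trans hle) hra'
  have hmono : BSE c r ra ≤ BSE c r ra' :=
    csInf_image_le_csInf_image hF (bddBelow_bstar_image_feas r hFa) fun f hf =>
      bstar_mono (le_of_mem_feas hf) hle hra' hFa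
  have hlip : BSE c r ra' ≤ BSE c r ra + (ra' - ra) :=
    csInf_image_le_csInf_image_add hF (bddBelow_bstar_image_feas r hFa')
      fun f hf => bstar_le_add_sub (le_of_mem_feas hf) hra hle hFa'
  constructor <;> linarith

/-- `ra ↦ B^SE(r, ra)` is nondecreasing and 1-Lipschitz on `[0, C(E)]`. -/
theorem stmt18 {E : Type*} [Fintype E] [Nonempty E]
    (c : E → ℝ) (hc : ∀ e, 0 ≤ c e) (r : ℝ) (hr0 : 0 ≤ r) (hrC : r ≤ ∑ e, c e) :
    ∀ ra ra' : ℝ, 0 ≤ ra → ra ≤ ra' → ra' ≤ ∑ e, c e →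
      0 ≤ BSE c r ra' - BSE c r ra ∧ BSE c r ra' - BSE c r ra ≤ ra' - ra :=
  stmt18_general c hc r hr0 hrC
end
end
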